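/- arXiv:1804.06245 — 6 statements merged into one kernel-verified Lean document; each statement's English description precedes it below -/
import Mathlib

section
/- Let S be a finite nonempty subset of ℤ³ satisfying hypothesis (H). Then the function F : ℝ³ → ℝ defined by F(u) = Σ_{s∈S} exp⟨u,s⟩ is strictly convex on ℝ³. -/
/-!
`exp` is strictly convex, so each term `u ↦ exp ⟨u, s⟩` is convex, and strictly convex along
every segment on which `⟨·, s⟩` is not constant. A nonzero vector orthogonal to every step would be
the normal of a half-space containing `S`, so by (H) the steps separate points, and on any segment some term
is strictly convex.
-/

/-- Euclidean inner product between a real vector `u ∈ ℝ³` and an integer step `s ∈ ℤ³`. -/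
noncomputable def dot3 (u : ℝ × ℝ × ℝ) (s : ℤ × ℤ × ℤ) : ℝ :=
  u.1 * (s.1 : ℝ) + u.2.1 * (s.2.1 : ℝ) + u.2.2 * (s.2.2 : ℝ)

/-- Hypothesis (H): the step set `S` is not contained in any half-space
`{y : ⟨x,y⟩ ≥ 0}` with `x ≠ 0`. -/
def HypH (S : Finset (ℤ × ℤ × ℤ)) : Prop :=
  ¬ ∃ x : ℝ × ℝ × ℝ, x ≠ 0 ∧ ∀ s ∈ S, 0 ≤ dot3 x s

open Finset

theorem StrictConvexOn.sum_comp_linearMap {𝕜 E ι : Type*} [Field 𝕜] [LinearOrder 𝕜]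
    [IsStrictOrderedRing 𝕜] [AddCommGroup E] [Module 𝕜 E] {f : 𝕜 → 𝕜}
    (hf : StrictConvexOn 𝕜 Set.univ f) (t : Finset ι) (ℓ : ι → E →ₗ[𝕜] 𝕜)
    (hsep : ∀ x y, (∀ i ∈ t, ℓ i x = ℓ i y) → x = y) :
    StrictConvexOn 𝕜 Set.univ (fun u => ∑ i ∈ t, f (ℓ i u)) := by
  refine ⟨convex_univ, fun x _ y _ hxy a b ha hb hab => ?_⟩
  obtain ⟨i₀, hi₀, hne⟩ : ∃ i ∈ t, ℓ i x ≠ ℓ i y := by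
    by_contra! h
    exact hxy (hsep x y h)
  have hle : ∀ i ∈ t, f (ℓ i (a • x + b • y)) ≤ a • f (ℓ i x) + b • f (ℓ i y) := fun i _ => by
    simpa using hf.convexOn.2 (Set.mem_univ (ℓ i x)) (Set.mem_univ (ℓ i y)) ha.le hb.le hab
  have hlt : f (ℓ i₀ (a • x + b • y)) < a • f (ℓ i₀ x) + b • f (ℓ i₀ y) := by
    simpa using hf.2 (Set.mem_univ _) (Set.mem_univ _) hne ha hb hab
  calc ∑ i ∈ t, f (ℓ i (a • x + b • y))
      < ∑ i ∈ t, (a • f (ℓ i x) + b • f (ℓ i y)) := sum_lt_sum hle ⟨i₀, hi₀, hlt⟩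
    _ = a • ∑ i ∈ t, f (ℓ i x) + b • ∑ i ∈ t, f (ℓ i y) := by
      rw [sum_add_distrib, smul_sum, smul_sum]

noncomputable def dot3Linear (s : ℤ × ℤ × ℤ) : (ℝ × ℝ × ℝ) →ₗ[ℝ] ℝ where
  toFun u := dot3 u s
  map_add' u v := by simp only [dot3, Prod.fst_add, Prod.snd_add]; ring
  map_smul' c u := by simp only [dot3, Prod.smul_fst, Prod.smul_snd, smul_eq_mul, RingHom.id_apply]; ring

@[simp]
theorem dot3Linear_apply (s : ℤ × ℤ × ℤ) (u : ℝ × ℝ × ℝ) : dot3Linear s u = dot3 u s := rfl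

theorem HypH.eq_of_forall_dot3_eq {S : Finset (ℤ × ℤ × ℤ)} (hH : HypH S) {x y : ℝ × ℝ × ℝ}
    (h : ∀ s ∈ S, dot3 x s = dot3 y s) : x = y := by
  by_contra hxy
  refine hH ⟨x - y, sub_ne_zero.mpr hxy, fun s hs => ?_⟩
  rw [← dot3Linear_apply, map_sub, dot3Linear_apply, dot3Linear_apply, h s hs, sub_self]

theorem strictConvexOn_exp_inventory_general (S : Finset (ℤ × ℤ × ℤ))
    (hH : HypH S) :
    StrictConvexOn ℝ Set.univ (fun u : ℝ × ℝ × ℝ => ∑ s ∈ S, Real.exp (dot3 u s)) :=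
  strictConvexOn_exp.sum_comp_linearMap S dot3Linear fun _ _ h => hH.eq_of_forall_dot3_eq h

/-- under (H), the exponential inventory `F(u) = Σ_{s∈S} exp⟨u,s⟩`
is strictly convex on `ℝ³`. -/
theorem strictConvexOn_exp_inventory (S : Finset (ℤ × ℤ × ℤ)) (hS : S.Nonempty)
    (hH : HypH S) :
    StrictConvexOn ℝ Set.univ (fun u : ℝ × ℝ × ℝ => ∑ s ∈ S, Real.exp (dot3 u s)) :=
  strictConvexOn_exp_inventory_general S hH
end

section
/- Let S be a finite nonempty subset of ℤ³ satisfying hypothesis (H). Then the function F(u) = Σ_{s∈S} exp⟨u,s⟩ is coercive: there exists δ > 0 such that F(u) ≥ exp(δ‖u‖) for all u ∈ ℝ³; in particular F(u) → ∞ as ‖u‖ → ∞. -/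
section Homogeneous

variable {E : Type*} [NormedAddCommGroup E] [NormedSpace ℝ E] {g : E → ℝ}

lemma mul_norm_le_of_forall_mem_sphere (hg : ∀ c : ℝ, 0 < c → ∀ x, g (c • x) = c * g x)
    {δ : ℝ} (hδ : ∀ x ∈ Metric.sphere (0 : E) 1, δ ≤ g x) (u : E) : δ * ‖u‖ ≤ g u := by
  rcases eq_or_ne u 0 with rfl | hu
  · have h0 : g 0 = 2 * g 0 := by simpa using hg 2 two_pos 0
    rw [norm_zero, mul_zero]
    linarith
  · have hnu : 0 < ‖u‖ := norm_pos_iff.mpr hu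
    have hunit : ‖u‖⁻¹ • u ∈ Metric.sphere (0 : E) 1 := by
      simp [norm_smul, hnu.ne']
    calc δ * ‖u‖ ≤ g (‖u‖⁻¹ • u) * ‖u‖ := by gcongr; exact hδ _ hunit
      _ = g u := by
        rw [hg _ (inv_pos.mpr hnu), mul_comm, ← mul_assoc, mul_inv_cancel₀ hnu.ne', one_mul]

lemma exists_pos_mul_norm_le_of_homogeneous [ProperSpace E] (hcont : Continuous g)
    (hg : ∀ c : ℝ, 0 < c → ∀ x, g (c • x) = c * g x) (hpos : ∀ x ≠ 0, 0 < g x) :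
    ∃ δ > 0, ∀ u, δ * ‖u‖ ≤ g u := by
  rcases (Metric.sphere (0 : E) 1).eq_empty_or_nonempty with hempty | hne
  · exact ⟨1, one_pos, mul_norm_le_of_forall_mem_sphere hg (by simp [hempty])⟩
  · obtain ⟨x₀, hx₀, hmin⟩ :=
      (isCompact_sphere (0 : E) 1).exists_isMinOn hne hcont.continuousOn
    have hx₀ne : x₀ ≠ 0 := ne_zero_of_mem_unit_sphere ⟨x₀, hx₀⟩
    exact ⟨g x₀, hpos x₀ hx₀ne, mul_norm_le_of_forall_mem_sphere hg hmin⟩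

end Homogeneous

lemma Real.exp_sup'_le_sum_exp {ι : Type*} {s : Finset ι} (hs : s.Nonempty) (f : ι → ℝ) :
    Real.exp (s.sup' hs f) ≤ ∑ i ∈ s, Real.exp (f i) := by
  obtain ⟨i, hi, hsup⟩ := s.exists_mem_eq_sup' hs f
  rw [hsup]
  exact Finset.single_le_sum (fun j _ => (Real.exp_pos (f j)).le) hi

lemma dot3_neg (x : ℝ × ℝ × ℝ) (s : ℤ × ℤ × ℤ) : dot3 (-x) s = -dot3 x s := by
  simp only [dot3, Prod.fst_neg, Prod.snd_neg]
  ring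

lemma dot3_smul (c : ℝ) (x : ℝ × ℝ × ℝ) (s : ℤ × ℤ × ℤ) :
    dot3 (c • x) s = c * dot3 x s := by
  simp only [dot3, Prod.smul_fst, Prod.smul_snd, smul_eq_mul]
  ring

lemma continuous_dot3 (s : ℤ × ℤ × ℤ) : Continuous fun u : ℝ × ℝ × ℝ => dot3 u s := by
  unfold dot3
  fun_prop

lemma HypH.exists_pos_dot3 {S : Finset (ℤ × ℤ × ℤ)} (hH : HypH S) {x : ℝ × ℝ × ℝ}
    (hx : x ≠ 0) : ∃ s ∈ S, 0 < dot3 x s := by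
  by_contra! hneg
  exact hH ⟨-x, neg_ne_zero.mpr hx, fun s hs => by rw [dot3_neg]; linarith [hneg s hs]⟩

/-- under (H), the exponential inventory `F(u) = Σ_{s∈S} exp⟨u,s⟩` is
coercive: there is `δ > 0` with `F(u) ≥ exp (δ‖u‖)` for all `u`; in particular
`F(u) → ∞` as `‖u‖ → ∞`. -/
theorem exp_inventory_coercive (S : Finset (ℤ × ℤ × ℤ)) (hS : S.Nonempty)
    (hH : HypH S) :
    (∃ δ > (0 : ℝ), ∀ u : ℝ × ℝ × ℝ,
        Real.exp (δ * ‖u‖) ≤ ∑ s ∈ S, Real.exp (dot3 u s)) ∧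
    Filter.Tendsto (fun u : ℝ × ℝ × ℝ => ∑ s ∈ S, Real.exp (dot3 u s))
      (Filter.cocompact (ℝ × ℝ × ℝ)) Filter.atTop := by
  obtain ⟨δ, hδ, hsupport⟩ := exists_pos_mul_norm_le_of_homogeneous
    (g := fun u => S.sup' hS (dot3 u))
    (Continuous.finset_sup'_apply hS fun s _ => continuous_dot3 s)
    (fun c hc x => by simp only [dot3_smul, Finset.mul₀_sup' hc.le])
    (fun x hx => (Finset.lt_sup'_iff hS).mpr (hH.exists_pos_dot3 hx))
  have hbound : ∀ u, Real.exp (δ * ‖u‖) ≤ ∑ s ∈ S, Real.exp (dot3 u s) := fun u =>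
    (Real.exp_le_exp.mpr (hsupport u)).trans (Real.exp_sup'_le_sum_exp hS _)
  refine ⟨⟨δ, hδ, hbound⟩, Filter.tendsto_atTop_mono hbound ?_⟩
  exact Real.tendsto_exp_atTop.comp (tendsto_norm_cocompact_atTop.const_mul_atTop hδ)
end

section
/- Let S be a finite nonempty subset of ℤ³ satisfying hypothesis (H), and let χ be its inventory. Then the system of equations ∂χ/∂x = ∂χ/∂y = ∂χ/∂z = 0 admits a unique solution (x₀,y₀,z₀) in (0,∞)³, and χ attains its global minimum over (0,∞)³ exactly at the point (x₀,y₀,z₀). -/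
/-- The inventory (characteristic polynomial) `χ(x,y,z) = Σ_{(i,j,k)∈S} x^i y^j z^k`
of a step set `S ⊆ ℤ³` (the exponents may be negative). -/
noncomputable def inventory (S : Finset (ℤ × ℤ × ℤ)) (x y z : ℝ) : ℝ :=
  ∑ s ∈ S, x ^ s.1 * y ^ s.2.1 * z ^ s.2.2

/-!
In logarithmic coordinates `(x, y, z) = (eᵃ, eᵇ, eᶜ)` the inventory becomes
`G(u) = ∑ₛ exp ⟨u, s⟩`, a sum of exponentials of linear forms, hence convex, and its partial
derivatives are those of `G` divided by `x`, `y`, `z`. Hypothesis (H) says that every direction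
`d ≠ 0` has some `⟨d, s⟩ > 0`. By compactness of the unit sphere this gives `G(u) ≥ ε ‖u‖`, so `G`
attains a minimum, and it makes `G` strictly convex along every line, so the minimizer is unique.
Finally, by the tangent-line inequality `exp (a + b) ≥ exp a * (1 + b)`, every critical point of
`G` is a minimizer.
-/

open Real Finset Filter

section ExpSum

variable {E ι : Type*} [NormedAddCommGroup E] [NormedSpace ℝ E]
  (s : Finset ι) (ℓ : ι → E →L[ℝ] ℝ)

noncomputable def expSum (u : E) : ℝ :=
  ∑ i ∈ s, exp (ℓ i u)

noncomputable def expSumDeriv (u : E) : E →L[ℝ] ℝ :=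
  ∑ i ∈ s, exp (ℓ i u) • ℓ i

lemma expSumDeriv_apply (u d : E) :
    expSumDeriv s ℓ u d = ∑ i ∈ s, exp (ℓ i u) * ℓ i d := by
  simp [expSumDeriv]

lemma continuous_expSum : Continuous (expSum s ℓ) := by
  unfold expSum; fun_prop

lemma hasFDerivAt_expSum (u : E) : HasFDerivAt (expSum s ℓ) (expSumDeriv s ℓ u) u :=
  HasFDerivAt.fun_sum fun i _ => (ℓ i).hasFDerivAt.exp

lemma expSum_add_expSumDeriv_le (u d : E) :
    expSum s ℓ u + expSumDeriv s ℓ u d ≤ expSum s ℓ (u + d) := by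
  rw [expSumDeriv_apply, expSum, expSum, ← sum_add_distrib]
  refine sum_le_sum fun i _ => ?_
  rw [map_add, exp_add]
  nlinarith [add_one_le_exp (ℓ i d), exp_pos (ℓ i u)]

lemma expSum_le_of_expSumDeriv_eq_zero {u : E} (h : expSumDeriv s ℓ u = 0) (v : E) :
    expSum s ℓ u ≤ expSum s ℓ v := by
  simpa [h] using expSum_add_expSumDeriv_le s ℓ u (v - u)

lemma expSumDeriv_eq_zero_of_forall_le {u : E} (h : ∀ v, expSum s ℓ u ≤ expSum s ℓ v) :
    expSumDeriv s ℓ u = 0 :=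
  IsLocalMin.hasFDerivAt_eq_zero (Eventually.of_forall h) (hasFDerivAt_expSum s ℓ u)

lemma expSum_midpoint_lt {u v : E} (h : ∃ i ∈ s, ℓ i u ≠ ℓ i v) :
    expSum s ℓ ((2⁻¹ : ℝ) • (u + v)) < (expSum s ℓ u + expSum s ℓ v) / 2 := by
  rw [expSum, expSum, expSum, ← sum_add_distrib, sum_div]
  refine sum_lt_sum (fun i _ => ?_) ?_
  · simpa [map_smul, map_add, mul_add, add_div, div_eq_inv_mul] using
      strictConvexOn_exp.convexOn.2 (Set.mem_univ (ℓ i u)) (Set.mem_univ (ℓ i v))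
        (by norm_num : (0 : ℝ) ≤ 2⁻¹) (by norm_num : (0 : ℝ) ≤ 2⁻¹) (by norm_num)
  · obtain ⟨i, hi, hne⟩ := h
    refine ⟨i, hi, ?_⟩
    simpa [map_smul, map_add, mul_add, add_div, div_eq_inv_mul] using
      strictConvexOn_exp.2 (Set.mem_univ (ℓ i u)) (Set.mem_univ (ℓ i v)) hne
        (by norm_num : (0 : ℝ) < 2⁻¹) (by norm_num : (0 : ℝ) < 2⁻¹) (by norm_num)

variable {s ℓ}

lemma expSum_lt_of_forall_le (hpos : ∀ d ≠ 0, ∃ i ∈ s, 0 < ℓ i d) {u : E}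
    (hu : ∀ v, expSum s ℓ u ≤ expSum s ℓ v) {v : E} (hv : v ≠ u) :
    expSum s ℓ u < expSum s ℓ v := by
  refine (hu v).lt_of_ne fun heq => ?_
  obtain ⟨i, hi, hpos_i⟩ := hpos (v - u) (sub_ne_zero.mpr hv)
  rw [map_sub, sub_pos] at hpos_i
  have hmid := expSum_midpoint_lt s ℓ ⟨i, hi, hpos_i.ne⟩
  linarith [hu ((2⁻¹ : ℝ) • (u + v))]

lemma eq_of_expSumDeriv_eq_zero (hpos : ∀ d ≠ 0, ∃ i ∈ s, 0 < ℓ i d) {u₀ : E}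
    (hu₀ : ∀ v, expSum s ℓ u₀ ≤ expSum s ℓ v) {u : E} (hu : expSumDeriv s ℓ u = 0) : u = u₀ := by
  by_contra hne
  exact (expSum_lt_of_forall_le hpos hu₀ hne).not_ge (expSum_le_of_expSumDeriv_eq_zero s ℓ hu u₀)

lemma exists_pos_mul_norm_le_sum_max [FiniteDimensional ℝ E]
    (hpos : ∀ d ≠ 0, ∃ i ∈ s, 0 < ℓ i d) :
    ∃ ε > 0, ∀ u : E, ε * ‖u‖ ≤ ∑ i ∈ s, max (ℓ i u) 0 := by
  have hcont : Continuous fun u : E => ∑ i ∈ s, max (ℓ i u) 0 := by fun_prop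
  obtain ⟨ε, hε, hsphere⟩ := (isCompact_sphere (0 : E) 1).exists_forall_le'
    hcont.continuousOn (a := 0) fun d hd => by
      obtain ⟨i, hi, hdi⟩ := hpos d (ne_zero_of_mem_unit_sphere ⟨d, hd⟩)
      exact sum_pos' (fun _ _ => le_max_right _ _) ⟨i, hi, lt_max_of_lt_left hdi⟩
  refine ⟨ε, hε, fun u => ?_⟩
  rcases eq_or_ne u 0 with rfl | hu
  · simp
  have hnorm : 0 < ‖u‖ := norm_pos_iff.mpr hu
  have hscaled := hsphere (‖u‖⁻¹ • u) (by simp [norm_smul, hnorm.ne'])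
  simp only [map_smul, smul_eq_mul] at hscaled
  have hhom : ∑ i ∈ s, max (‖u‖⁻¹ * ℓ i u) 0 = ‖u‖⁻¹ * ∑ i ∈ s, max (ℓ i u) 0 := by
    rw [mul_sum]
    exact sum_congr rfl fun i _ => by
      rw [mul_max_of_nonneg _ _ (inv_nonneg.mpr hnorm.le), mul_zero]
  rw [hhom, le_inv_mul_iff₀ hnorm] at hscaled
  linarith

lemma exists_forall_expSum_le [FiniteDimensional ℝ E] (hpos : ∀ d ≠ 0, ∃ i ∈ s, 0 < ℓ i d) :
    ∃ u, ∀ v, expSum s ℓ u ≤ expSum s ℓ v := by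
  obtain ⟨ε, hε, hgrowth⟩ := exists_pos_mul_norm_le_sum_max hpos
  have hlower : ∀ u, ε * ‖u‖ ≤ expSum s ℓ u := fun u =>
    (hgrowth u).trans <| sum_le_sum fun i _ =>
      max_le ((le_add_of_nonneg_right zero_le_one).trans (add_one_le_exp _)) (exp_pos _).le
  exact (continuous_expSum s ℓ).exists_forall_le <|
    tendsto_atTop_mono hlower (tendsto_norm_cocompact_atTop.const_mul_atTop hε)

end ExpSum

noncomputable def dot3CLM (s : ℤ × ℤ × ℤ) : ℝ × ℝ × ℝ →L[ℝ] ℝ :=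
  LinearMap.toContinuousLinearMap
    { toFun := fun u => dot3 u s
      map_add' := fun u v => by simp only [dot3, Prod.fst_add, Prod.snd_add]; ring
      map_smul' := fun c u => by
        simp only [dot3, Prod.smul_fst, Prod.smul_snd, smul_eq_mul, RingHom.id_apply]; ring }

lemma dot3CLM_apply (s : ℤ × ℤ × ℤ) (u : ℝ × ℝ × ℝ) : dot3CLM s u = dot3 u s := rfl

lemma HypH.exists_pos_dot3CLM {S : Finset (ℤ × ℤ × ℤ)} (hH : HypH S) :
    ∀ d ≠ 0, ∃ s ∈ S, 0 < dot3CLM s d := by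
  intro d hd
  by_contra! h
  refine hH ⟨-d, neg_ne_zero.mpr hd, fun s hs => ?_⟩
  have := h s hs
  simp only [dot3CLM_apply, dot3, Prod.fst_neg, Prod.snd_neg] at this ⊢
  linarith

lemma exp_dot3 (u : ℝ × ℝ × ℝ) (s : ℤ × ℤ × ℤ) :
    exp (dot3 u s) = exp u.1 ^ s.1 * exp u.2.1 ^ s.2.1 * exp u.2.2 ^ s.2.2 := by
  simp only [dot3, exp_add, ← rpow_intCast, ← exp_mul]

lemma inventory_exp (S : Finset (ℤ × ℤ × ℤ)) (u : ℝ × ℝ × ℝ) :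
    inventory S (exp u.1) (exp u.2.1) (exp u.2.2) = expSum S dot3CLM u :=
  sum_congr rfl fun s _ => (exp_dot3 u s).symm

lemma exists_eq_exp {x y z : ℝ} (hx : 0 < x) (hy : 0 < y) (hz : 0 < z) :
    ∃ u : ℝ × ℝ × ℝ, x = exp u.1 ∧ y = exp u.2.1 ∧ z = exp u.2.2 :=
  ⟨(log x, log y, log z), (exp_log hx).symm, (exp_log hy).symm, (exp_log hz).symm⟩

lemma hasDerivAt_sum_mul_zpow {ι : Type*} (s : Finset ι) (c : ι → ℝ) (k : ι → ℤ) {x : ℝ}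
    (hx : x ≠ 0) :
    HasDerivAt (fun t => ∑ i ∈ s, c i * t ^ k i) (x⁻¹ * ∑ i ∈ s, k i * (c i * x ^ k i)) x := by
  rw [mul_sum]
  refine HasDerivAt.fun_sum fun i _ => ?_
  refine ((hasDerivAt_zpow (k i) x (Or.inl hx)).const_mul (c i)).congr_deriv ?_
  rw [zpow_sub_one₀ hx]
  ring

section Partials

variable (S : Finset (ℤ × ℤ × ℤ)) (u : ℝ × ℝ × ℝ)

lemma deriv_inventory_x :
    deriv (fun x => inventory S x (exp u.2.1) (exp u.2.2)) (exp u.1)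
      = (exp u.1)⁻¹ * expSumDeriv S dot3CLM u (1, 0, 0) := by
  have hfun : (fun x => inventory S x (exp u.2.1) (exp u.2.2))
      = fun x => ∑ s ∈ S, (exp u.2.1 ^ s.2.1 * exp u.2.2 ^ s.2.2) * x ^ s.1 :=
    funext fun x => sum_congr rfl fun s _ => by ring
  rw [hfun, (hasDerivAt_sum_mul_zpow S _ _ (exp_ne_zero _)).deriv, expSumDeriv_apply]
  refine congrArg _ (sum_congr rfl fun s _ => ?_)
  rw [dot3CLM_apply, dot3CLM_apply, exp_dot3, dot3]
  ring

lemma deriv_inventory_y :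
    deriv (fun y => inventory S (exp u.1) y (exp u.2.2)) (exp u.2.1)
      = (exp u.2.1)⁻¹ * expSumDeriv S dot3CLM u (0, 1, 0) := by
  have hfun : (fun y => inventory S (exp u.1) y (exp u.2.2))
      = fun y => ∑ s ∈ S, (exp u.1 ^ s.1 * exp u.2.2 ^ s.2.2) * y ^ s.2.1 :=
    funext fun y => sum_congr rfl fun s _ => by ring
  rw [hfun, (hasDerivAt_sum_mul_zpow S _ _ (exp_ne_zero _)).deriv, expSumDeriv_apply]
  refine congrArg _ (sum_congr rfl fun s _ => ?_)
  rw [dot3CLM_apply, dot3CLM_apply, exp_dot3, dot3]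
  ring

lemma deriv_inventory_z :
    deriv (fun z => inventory S (exp u.1) (exp u.2.1) z) (exp u.2.2)
      = (exp u.2.2)⁻¹ * expSumDeriv S dot3CLM u (0, 0, 1) := by
  have hfun : (fun z => inventory S (exp u.1) (exp u.2.1) z)
      = fun z => ∑ s ∈ S, (exp u.1 ^ s.1 * exp u.2.1 ^ s.2.1) * z ^ s.2.2 :=
    funext fun z => sum_congr rfl fun s _ => by ring
  rw [hfun, (hasDerivAt_sum_mul_zpow S _ _ (exp_ne_zero _)).deriv, expSumDeriv_apply]
  refine congrArg _ (sum_congr rfl fun s _ => ?_)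
  rw [dot3CLM_apply, dot3CLM_apply, exp_dot3, dot3]
  ring

lemma inventory_partials_eq_zero_iff :
    (deriv (fun x => inventory S x (exp u.2.1) (exp u.2.2)) (exp u.1) = 0 ∧
      deriv (fun y => inventory S (exp u.1) y (exp u.2.2)) (exp u.2.1) = 0 ∧
      deriv (fun z => inventory S (exp u.1) (exp u.2.1) z) (exp u.2.2) = 0)
      ↔ expSumDeriv S dot3CLM u = 0 := by
  simp only [deriv_inventory_x, deriv_inventory_y, deriv_inventory_z, mul_eq_zero,
    inv_eq_zero, exp_ne_zero, false_or]
  refine ⟨fun ⟨h₁, h₂, h₃⟩ => ?_, fun h => by simp [h]⟩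
  ext <;> simpa

end Partials

theorem inventory_unique_critical_point_general (S : Finset (ℤ × ℤ × ℤ))
    (hH : HypH S) :
    ∃ x₀ y₀ z₀ : ℝ, 0 < x₀ ∧ 0 < y₀ ∧ 0 < z₀ ∧
      deriv (fun x => inventory S x y₀ z₀) x₀ = 0 ∧
      deriv (fun y => inventory S x₀ y z₀) y₀ = 0 ∧
      deriv (fun z => inventory S x₀ y₀ z) z₀ = 0 ∧
      (∀ x y z : ℝ, 0 < x → 0 < y → 0 < z →
        deriv (fun x' => inventory S x' y z) x = 0 →
        deriv (fun y' => inventory S x y' z) y = 0 →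
        deriv (fun z' => inventory S x y z') z = 0 →
        (x, y, z) = (x₀, y₀, z₀)) ∧
      (∀ x y z : ℝ, 0 < x → 0 < y → 0 < z → (x, y, z) ≠ (x₀, y₀, z₀) →
        inventory S x₀ y₀ z₀ < inventory S x y z) := by
  have hpos := hH.exists_pos_dot3CLM
  obtain ⟨u₀, hu₀⟩ := exists_forall_expSum_le hpos
  obtain ⟨h₁, h₂, h₃⟩ :=
    (inventory_partials_eq_zero_iff S u₀).2 (expSumDeriv_eq_zero_of_forall_le S dot3CLM hu₀)
  refine ⟨exp u₀.1, exp u₀.2.1, exp u₀.2.2, exp_pos _, exp_pos _, exp_pos _, h₁, h₂, h₃, ?_, ?_⟩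
  · intro x y z hx hy hz hx' hy' hz'
    obtain ⟨u, rfl, rfl, rfl⟩ := exists_eq_exp hx hy hz
    rw [eq_of_expSumDeriv_eq_zero hpos hu₀
      ((inventory_partials_eq_zero_iff S u).1 ⟨hx', hy', hz'⟩)]
  · intro x y z hx hy hz hne
    obtain ⟨u, rfl, rfl, rfl⟩ := exists_eq_exp hx hy hz
    rw [inventory_exp, inventory_exp]
    exact expSum_lt_of_forall_le hpos hu₀ fun h => hne (by rw [h])

/-- under (H), the system `∂χ/∂x = ∂χ/∂y = ∂χ/∂z = 0` has a unique
solution `(x₀,y₀,z₀)` in `(0,∞)³`, and `χ` attains its global minimum on `(0,∞)³`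
exactly at this point. -/
theorem inventory_unique_critical_point (S : Finset (ℤ × ℤ × ℤ)) (hS : S.Nonempty)
    (hH : HypH S) :
    ∃ x₀ y₀ z₀ : ℝ, 0 < x₀ ∧ 0 < y₀ ∧ 0 < z₀ ∧
      deriv (fun x => inventory S x y₀ z₀) x₀ = 0 ∧
      deriv (fun y => inventory S x₀ y z₀) y₀ = 0 ∧
      deriv (fun z => inventory S x₀ y₀ z) z₀ = 0 ∧
      (∀ x y z : ℝ, 0 < x → 0 < y → 0 < z →
        deriv (fun x' => inventory S x' y z) x = 0 →
        deriv (fun y' => inventory S x y' z) y = 0 →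
        deriv (fun z' => inventory S x y z') z = 0 →
        (x, y, z) = (x₀, y₀, z₀)) ∧
      (∀ x y z : ℝ, 0 < x → 0 < y → 0 < z → (x, y, z) ≠ (x₀, y₀, z₀) →
        inventory S x₀ y₀ z₀ < inventory S x y z) :=
  inventory_unique_critical_point_general S hH
end

section
/- The number arccos(-√7/3) is not a rational multiple of π; equivalently, π/arccos(-√7/3) is irrational. (Consequently the critical exponent λ = π/arccos(-√7/3) + 5/2 of the corresponding 3D walk model is irrational.) -/
/-! For `θ = arccos (-√7/3)` we have `cos 2θ = 2 · 7/9 - 1 = 5/9`, a rational number, whereas by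
Niven's theorem the only rational cosines of rational multiples of `π` are `0, ±1/2, ±1`. -/

open Real

theorem cos_sq_rat_mul_pi_mem {r : ℚ} (hcos : ∃ q : ℚ, cos (r * π) ^ 2 = q) :
    cos (r * π) ^ 2 ∈ ({0, 1 / 4, 1 / 2, 3 / 4, 1} : Set ℝ) := by
  obtain ⟨q, hq⟩ := hcos
  have hhalf : cos (r * π) ^ 2 = (cos (((2 * r : ℚ) : ℝ) * π) + 1) / 2 := by
    rw [cos_sq]; push_cast; ring_nf
  have hmem := niven ⟨2 * r, rfl⟩ ⟨2 * q - 1, by push_cast at hhalf ⊢; linarith⟩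
  generalize cos (((2 * r : ℚ) : ℝ) * π) = c at hmem hhalf
  rw [hhalf]
  rcases hmem with rfl | rfl | rfl | rfl | rfl <;> norm_num

theorem irrational_pi_div_of_ne_rat_mul_pi {x : ℝ} (hx : x ≠ 0) (h : ∀ q : ℚ, x ≠ q * π) :
    Irrational (π / x) := by
  rintro ⟨q, hq⟩
  have hq0 : (q : ℝ) ≠ 0 := by rw [hq]; exact div_ne_zero pi_ne_zero hx
  refine h q⁻¹ ?_
  rw [Rat.cast_inv, hq]
  field_simp

theorem cos_sq_arccos_neg_sqrt7_div3 : cos (arccos (-(√7 / 3))) ^ 2 = ((7 / 9 : ℚ) : ℝ) := by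
  have h7 : √7 ^ 2 = 7 := sq_sqrt (by norm_num)
  have hle : √7 ≤ 3 := by nlinarith [sqrt_nonneg 7]
  rw [cos_arccos (by linarith) (by linarith [sqrt_nonneg 7])]
  push_cast
  linear_combination h7 / 9

/-- `arccos(-√7/3)` is not a rational multiple of `π`; equivalently
`π / arccos(-√7/3)` is irrational, and consequently the critical exponent
`λ = π/arccos(-√7/3) + 5/2` is irrational. -/
theorem arccos_neg_sqrt7_div3_not_rat_mul_pi :
    (∀ q : ℚ, Real.arccos (-(Real.sqrt 7 / 3)) ≠ (q : ℝ) * Real.pi) ∧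
    Irrational (Real.pi / Real.arccos (-(Real.sqrt 7 / 3))) ∧
    Irrational (Real.pi / Real.arccos (-(Real.sqrt 7 / 3)) + 5 / 2) := by
  have hne : ∀ q : ℚ, arccos (-(√7 / 3)) ≠ q * π := by
    intro q hq
    have hmem := cos_sq_rat_mul_pi_mem ⟨7 / 9, hq ▸ cos_sq_arccos_neg_sqrt7_div3⟩
    rw [← hq, cos_sq_arccos_neg_sqrt7_div3] at hmem
    norm_num at hmem
  have hpos : 0 < arccos (-(√7 / 3)) := arccos_pos.mpr (by linarith [sqrt_nonneg 7])
  have hirr := irrational_pi_div_of_ne_rat_mul_pi hpos.ne' hne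
  exact ⟨hne, hirr, by simpa using hirr.add_ratCast (5 / 2)⟩
end

section
/- The number arccos(-√(7/10)) is not a rational multiple of π; equivalently, π/arccos(-√(7/10)) is irrational. (Consequently the critical exponent λ = π/arccos(-√(7/10)) + 5/2 of the corresponding 3D walk model is irrational.) -/
/-!
The angle `θ = arccos (-√(7/10))` has `cos (2θ) = 2 cos² θ - 1 = 2/5`. If `θ` were a rational
multiple of `π`, so would be `2θ`, and Niven's theorem allows only `0, ±1/2, ±1` as rational
values of the cosine at such angles.
-/

open Real

theorem niven_cos_sq {θ : ℝ} (hθ : ∃ r : ℚ, θ = r * π) (hcos : ∃ q : ℚ, cos θ ^ 2 = q) :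
    cos θ ^ 2 ∈ ({0, 1 / 4, 1 / 2, 3 / 4, 1} : Set ℝ) := by
  obtain ⟨r, rfl⟩ := hθ
  obtain ⟨q, hq⟩ := hcos
  have hdouble : cos (2 * (r * π)) ∈ ({-1, -1 / 2, 0, 1 / 2, 1} : Set ℝ) :=
    niven ⟨2 * r, by push_cast; ring⟩ ⟨2 * q - 1, by rw [cos_two_mul, hq]; push_cast; ring⟩
  have hhalf : cos (r * π) ^ 2 = (cos (2 * (r * π)) + 1) / 2 := by rw [cos_two_mul]; ring
  rcases hdouble with h | h | h | h | h <;> rw [hhalf, h] <;> norm_num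

theorem irrational_pi_div_of_forall_ne_rat_mul_pi {θ : ℝ} (h : ∀ q : ℚ, θ ≠ q * π) :
    Irrational (π / θ) := by
  rintro ⟨r, hr⟩
  apply h r⁻¹
  rw [Rat.cast_inv, hr, inv_div, div_mul_cancel₀ _ pi_ne_zero]

/-- `arccos(-√(7/10))` is not a rational multiple of `π`; equivalently
`π / arccos(-√(7/10))` is irrational, and consequently the critical exponent
`λ = π/arccos(-√(7/10)) + 5/2` is irrational. -/
theorem arccos_neg_sqrt_7_div_10_not_rat_mul_pi :
    (∀ q : ℚ, Real.arccos (-Real.sqrt (7 / 10)) ≠ (q : ℝ) * Real.pi) ∧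
    Irrational (Real.pi / Real.arccos (-Real.sqrt (7 / 10))) ∧
    Irrational (Real.pi / Real.arccos (-Real.sqrt (7 / 10)) + 5 / 2) := by
  have hsqrt_le_one : √(7 / 10) ≤ 1 := sqrt_le_one.mpr (by norm_num)
  have hcos_sq : cos (arccos (-√(7 / 10))) ^ 2 = 7 / 10 := by
    rw [cos_arccos (by linarith) (by linarith [sqrt_nonneg (7 / 10)]), neg_sq,
      sq_sqrt (by norm_num)]
  have hnot_rat_mul_pi : ∀ q : ℚ, arccos (-√(7 / 10)) ≠ q * π := by
    intro q hq
    have hniven := niven_cos_sq ⟨q, hq⟩ ⟨7 / 10, by rw [hcos_sq]; norm_num⟩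
    rw [hcos_sq] at hniven
    norm_num at hniven
  have hirrational := irrational_pi_div_of_forall_ne_rat_mul_pi hnot_rat_mul_pi
  exact ⟨hnot_rat_mul_pi, hirrational, by simpa using hirrational.add_ratCast (5 / 2)⟩
end

section
/- Let (x,y,z) be a spherical triangle, i.e., a triple of linearly independent unit vectors in ℝ³. Then there exists a unique triple (x',y',z') of unit vectors in ℝ³ satisfying ⟨x',y⟩ = ⟨x',z⟩ = 0 and ⟨x',x⟩ > 0; ⟨y',z⟩ = ⟨y',x⟩ = 0 and ⟨y',y⟩ > 0; ⟨z',x⟩ = ⟨z',y⟩ = 0 and ⟨z',z⟩ > 0. Moreover (x',y',z') is again a spherical triangle (x',y',z' are linearly independent), and the polar transformation is involutive: the polar triangle of (x',y',z') is (x,y,z). -/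
/-- ℝ³ with the Euclidean inner product. -/
noncomputable abbrev E3 := EuclideanSpace ℝ (Fin 3)

/-- `(x',y',z')` is the polar triple of `(x,y,z)`. -/
def IsPolarTriple (x y z x' y' z' : E3) : Prop :=
  ‖x'‖ = 1 ∧ ‖y'‖ = 1 ∧ ‖z'‖ = 1 ∧
  (inner ℝ x' y : ℝ) = 0 ∧ (inner ℝ x' z : ℝ) = 0 ∧ 0 < (inner ℝ x' x : ℝ) ∧
  (inner ℝ y' z : ℝ) = 0 ∧ (inner ℝ y' x : ℝ) = 0 ∧ 0 < (inner ℝ y' y : ℝ) ∧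
  (inner ℝ z' x : ℝ) = 0 ∧ (inner ℝ z' y : ℝ) = 0 ∧ 0 < (inner ℝ z' z : ℝ)

/-! The polar vector `x'` is the unit normal of the plane `span {y, z}` on the side of `x`.
The orthogonal complement of that plane is a line, and its two unit vectors are told apart by
the sign of their inner product with `x`; a normal with positive sign exists because `x` minus
its projection onto the plane is a nonzero normal `v` with `⟪v, x⟫ = ‖v‖²`. The pairing of
`(x', y', z')` with `(x, y, z)` is diagonal with nonzero diagonal, which forces linear
independence, and the defining conditions are symmetric in the two triples. -/

open Module Submodule
open scoped InnerProductSpace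

theorem LinearIndependent.rotate_vec3 {R M : Type*} [Semiring R] [AddCommMonoid M] [Module R M]
    {x y z : M} (h : LinearIndependent R ![x, y, z]) : LinearIndependent R ![y, z, x] := by
  convert h.comp (finRotate 3) (finRotate 3).injective using 1
  funext i; fin_cases i <;> rfl

section InnerProductSpace

variable {E : Type*} [NormedAddCommGroup E] [InnerProductSpace ℝ E]

theorem linearIndependent_of_inner_eq_zero_of_inner_ne_zero {ι : Type*} {v w : ι → E}
    (hoff : Pairwise fun i j => ⟪v i, w j⟫_ℝ = 0) (hdiag : ∀ i, ⟪v i, w i⟫_ℝ ≠ 0) :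
    LinearIndependent ℝ v := by
  rw [linearIndependent_iff']
  intro s g hg i hi
  have hgi : g i * ⟪v i, w i⟫_ℝ = 0 := by
    calc g i * ⟪v i, w i⟫_ℝ = ∑ j ∈ s, g j * ⟪v j, w i⟫_ℝ :=
          (Finset.sum_eq_single_of_mem (f := fun j => g j * ⟪v j, w i⟫_ℝ) i hi
            fun j _ hji => by rw [hoff hji, mul_zero]).symm
      _ = ⟪∑ j ∈ s, g j • v j, w i⟫_ℝ := by simp only [sum_inner, real_inner_smul_left]
      _ = 0 := by rw [hg, inner_zero_left]
  exact (mul_eq_zero.1 hgi).resolve_right (hdiag i)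

theorem exists_unit_mem_orthogonal_inner_pos (K : Submodule ℝ E) [K.HasOrthogonalProjection]
    {x : E} (hx : x ∉ K) : ∃ u ∈ Kᗮ, ‖u‖ = 1 ∧ 0 < ⟪u, x⟫_ℝ := by
  set v := x - K.starProjection x
  have hvK : v ∈ Kᗮ := K.sub_starProjection_mem_orthogonal x
  have hv : v ≠ 0 := sub_ne_zero.2 fun h => hx (K.starProjection_eq_self_iff.1 h.symm)
  have hvx : ⟪v, x⟫_ℝ = ‖v‖ ^ 2 := by
    calc ⟪v, x⟫_ℝ = ⟪v, v⟫_ℝ + ⟪v, K.starProjection x⟫_ℝ := by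
          rw [← inner_add_right, sub_add_cancel]
      _ = ‖v‖ ^ 2 := by
          rw [K.inner_left_of_mem_orthogonal (K.starProjection_apply_mem x) hvK, add_zero,
            real_inner_self_eq_norm_sq]
  refine ⟨‖v‖⁻¹ • v, Kᗮ.smul_mem _ hvK, norm_smul_inv_norm hv, ?_⟩
  rw [real_inner_smul_left, hvx]
  have hv_pos := norm_pos_iff.2 hv
  positivity

theorem eq_of_mem_of_finrank_eq_one_of_inner_pos {L : Submodule ℝ E} (hL : finrank ℝ L = 1)
    {u w x : E} (hu : u ∈ L) (hw : w ∈ L) (hu1 : ‖u‖ = 1) (hw1 : ‖w‖ = 1)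
    (hux : 0 < ⟪u, x⟫_ℝ) (hwx : 0 < ⟪w, x⟫_ℝ) : w = u := by
  have hu0 : (⟨u, hu⟩ : L) ≠ 0 := by
    simp [← norm_ne_zero_iff, hu1]
  obtain ⟨c, hc⟩ := (finrank_eq_one_iff_of_nonzero' _ hu0).1 hL ⟨w, hw⟩
  have hwc : w = c • u := congrArg Subtype.val hc.symm
  have hc1 : |c| = 1 := by rwa [hwc, norm_smul, hu1, mul_one, Real.norm_eq_abs] at hw1
  have hc0 : 0 < c := pos_of_mul_pos_left (by rwa [hwc, real_inner_smul_left] at hwx) hux.le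
  rw [hwc, ← abs_of_pos hc0, hc1, one_smul]

theorem existsUnique_unit_mem_orthogonal_inner_pos (K : Submodule ℝ E)
    [K.HasOrthogonalProjection] (hK : finrank ℝ Kᗮ = 1) {x : E} (hx : x ∉ K) :
    ∃! u, ‖u‖ = 1 ∧ u ∈ Kᗮ ∧ 0 < ⟪u, x⟫_ℝ := by
  obtain ⟨u, huK, hu1, hux⟩ := exists_unit_mem_orthogonal_inner_pos K hx
  exact ⟨u, ⟨hu1, huK, hux⟩, fun w ⟨hw1, hwK, hwx⟩ =>
    eq_of_mem_of_finrank_eq_one_of_inner_pos hK huK hwK hu1 hw1 hux hwx⟩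

theorem mem_orthogonal_span_pair_iff {u y z : E} :
    u ∈ (span ℝ {y, z})ᗮ ↔ ⟪u, y⟫_ℝ = 0 ∧ ⟪u, z⟫_ℝ = 0 := by
  rw [span_insert, ← inf_orthogonal, mem_inf, mem_orthogonal_singleton_iff_inner_left,
    mem_orthogonal_singleton_iff_inner_left]

theorem existsUnique_polar_vector [FiniteDimensional ℝ E] (hE : finrank ℝ E = 3) {x y z : E}
    (hli : LinearIndependent ℝ ![x, y, z]) :
    ∃! u : E, ‖u‖ = 1 ∧ ⟪u, y⟫_ℝ = 0 ∧ ⟪u, z⟫_ℝ = 0 ∧ 0 < ⟪u, x⟫_ℝ := by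
  obtain ⟨hyz, hx⟩ := linearIndependent_finSucc.1 hli
  have hrange : Set.range (Fin.tail ![x, y, z]) = {y, z} := by
    change Set.range ![y, z] = _
    rw [Matrix.range_cons, Matrix.range_cons, Matrix.range_empty, Set.union_empty,
      Set.singleton_union]
  rw [hrange] at hx
  have hK : finrank ℝ (span ℝ {y, z})ᗮ = 1 := by
    have h2 : finrank ℝ (span ℝ {y, z}) = 2 := by
      rw [← hrange, finrank_span_eq_card hyz, Fintype.card_fin]
    have := (span ℝ {y, z}).finrank_add_finrank_orthogonal
    omega
  simpa only [mem_orthogonal_span_pair_iff, Matrix.cons_val_zero, and_assoc] using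
    existsUnique_unit_mem_orthogonal_inner_pos _ hK hx

end InnerProductSpace

/-- every spherical triangle has a unique polar triple; the polar
triple is again a spherical triangle, and the polar transformation is involutive. -/
theorem polar_triangle_exists_unique (x y z : E3)
    (hx : ‖x‖ = 1) (hy : ‖y‖ = 1) (hz : ‖z‖ = 1)
    (hli : LinearIndependent ℝ ![x, y, z]) :
    ∃ x' y' z' : E3, IsPolarTriple x y z x' y' z' ∧
      (∀ x'' y'' z'' : E3, IsPolarTriple x y z x'' y'' z'' →
        x'' = x' ∧ y'' = y' ∧ z'' = z') ∧
      LinearIndependent ℝ ![x', y', z'] ∧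
      IsPolarTriple x' y' z' x y z := by
  have hE : finrank ℝ E3 = 3 := finrank_euclideanSpace_fin
  obtain ⟨x', ⟨hx'1, hx'y, hx'z, hx'x⟩, hx'u⟩ := existsUnique_polar_vector hE hli
  obtain ⟨y', ⟨hy'1, hy'z, hy'x, hy'y⟩, hy'u⟩ := existsUnique_polar_vector hE hli.rotate_vec3
  obtain ⟨z', ⟨hz'1, hz'x, hz'y, hz'z⟩, hz'u⟩ :=
    existsUnique_polar_vector hE hli.rotate_vec3.rotate_vec3
  refine ⟨x', y', z', ⟨hx'1, hy'1, hz'1, hx'y, hx'z, hx'x, hy'z, hy'x, hy'y, hz'x, hz'y, hz'z⟩,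
    ?_, ?_, ?_⟩
  · rintro x'' y'' z'' ⟨h1, h2, h3, h4, h5, h6, h7, h8, h9, h10, h11, h12⟩
    exact ⟨hx'u x'' ⟨h1, h4, h5, h6⟩, hy'u y'' ⟨h2, h7, h8, h9⟩, hz'u z'' ⟨h3, h10, h11, h12⟩⟩
  · refine linearIndependent_of_inner_eq_zero_of_inner_ne_zero (w := ![x, y, z]) ?_ ?_
    · intro i j hij
      fin_cases i <;> fin_cases j <;> simp [hx'y, hx'z, hy'z, hy'x, hz'x, hz'y] at hij ⊢
    · intro i
      fin_cases i <;> simp [hx'x.ne', hy'y.ne', hz'z.ne']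
  · simp only [IsPolarTriple, real_inner_comm x', real_inner_comm y', real_inner_comm z']
    exact ⟨hx, hy, hz, hy'x, hz'x, hx'x, hz'y, hx'y, hy'y, hx'z, hy'z, hz'z⟩
end
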